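/- Let n and m be non-parallel real unit vectors in ℝ³ (i.e., n ≠ m and n ≠ -m). Then every unitary 2×2 complex matrix U can be written as a global phase times a finite alternating product of rotations about n and m: there exist α ∈ ℝ, k ∈ ℕ, and real angles β₁, γ₁, …, β_k, γ_k such that U = e^{iα}·R_n(β₁)·R_m(γ₁)·⋯·R_n(β_k)·R_m(γ_k). -/

import Mathlib

open Matrix Complex
open scoped Real

noncomputable section

/-- The Pauli matrix σx. -/
def σx : Matrix (Fin 2) (Fin 2) ℂ := !![0, 1; 1, 0]

/-- The Pauli matrix σy. -/
def σy : Matrix (Fin 2) (Fin 2) ℂ := !![0, -Complex.I; Complex.I, 0]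

/-- The Pauli matrix σz. -/
def σz : Matrix (Fin 2) (Fin 2) ℂ := !![1, 0; 0, -1]

/-- `n·σ = a·σx + b·σy + c·σz` for a real vector `n = (a, b, c)`. -/
def dotσ (n : Fin 3 → ℝ) : Matrix (Fin 2) (Fin 2) ℂ :=
  (n 0 : ℂ) • σx + (n 1 : ℂ) • σy + (n 2 : ℂ) • σz

/-- The rotation `R_n(α) = cos(α/2)·I - i·sin(α/2)·(n·σ)`. -/
def Rot (n : Fin 3 → ℝ) (α : ℝ) : Matrix (Fin 2) (Fin 2) ℂ :=
  (Real.cos (α / 2) : ℂ) • (1 : Matrix (Fin 2) (Fin 2) ℂ)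
    - (Complex.I * (Real.sin (α / 2) : ℂ)) • dotσ n

/-!
Up to the phase `√(det U)`, `U` lies in `SU(2)`, and every element of `SU(2)` is a rotation
`R_p(ψ)` about some unit axis `p`. Conjugating `p·σ` by `R_u(θ)` rotates `p` about `u` through `θ`
(Rodrigues' formula), so `R_p(ψ) = W R_n(ψ) W⁻¹` as soon as some product `W` of rotations about `n`
and `m` carries the axis `p` to `n`. Such a `W` exists for every unit `p`: if `θ₀ ∈ (0, π/2]` is the
angle between `n` and `±m`, a rotation about `n` followed by one about `±m` brings `p` to angle
`max 0 (ρ - 2θ₀)` from `n`, where `ρ` is the angle between `p` and `n`; finitely many such steps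
bring `p` to `n`.
-/

lemma abs_dotProduct_le_one {u v : Fin 3 → ℝ} (hu : u ⬝ᵥ u = 1) (hv : v ⬝ᵥ v = 1) :
    |u ⬝ᵥ v| ≤ 1 := by
  have h := cross_dot_cross u v u v
  rw [hu, hv, dotProduct_comm v u, one_mul] at h
  rw [← sq_le_one_iff_abs_le_one, sq, ← sub_nonneg, ← h]
  exact dotProduct_self_star_nonneg _

lemma eq_of_dotProduct_eq_one {u v : Fin 3 → ℝ} (hu : u ⬝ᵥ u = 1) (hv : v ⬝ᵥ v = 1)
    (h : u ⬝ᵥ v = 1) : u = v := by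
  have : (u - v) ⬝ᵥ (u - v) = 0 := by
    simp only [sub_dotProduct, dotProduct_sub, hu, hv, h, dotProduct_comm v u]
    norm_num
  exact sub_eq_zero.1 (dotProduct_self_eq_zero.1 this)

lemma abs_dotProduct_lt_one {u v : Fin 3 → ℝ} (hu : u ⬝ᵥ u = 1) (hv : v ⬝ᵥ v = 1)
    (h : u ≠ v) (h' : u ≠ -v) : |u ⬝ᵥ v| < 1 := by
  refine (abs_dotProduct_le_one hu hv).lt_of_ne fun habs ↦ ?_
  rcases abs_eq_abs.1 (habs.trans abs_one.symm) with h₁ | h₁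
  · exact h (eq_of_dotProduct_eq_one hu hv h₁)
  · exact h' (eq_of_dotProduct_eq_one hu (by simpa using hv) (by simp [h₁]))

lemma exists_dotProduct_self_eq_one_and_eq_smul (v : Fin 3 → ℝ) :
    ∃ p : Fin 3 → ℝ, p ⬝ᵥ p = 1 ∧ v = √(v ⬝ᵥ v) • p := by
  rcases eq_or_ne v 0 with rfl | hv
  · exact ⟨![1, 0, 0], by simp, by simp⟩
  have hpos : 0 < v ⬝ᵥ v := dotProduct_self_star_pos_iff.2 hv
  refine ⟨(√(v ⬝ᵥ v))⁻¹ • v, ?_, ?_⟩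
  · rw [smul_dotProduct, dotProduct_smul, smul_eq_mul, smul_eq_mul, ← mul_assoc, ← sq, inv_pow,
      Real.sq_sqrt hpos.le, inv_mul_cancel₀ hpos.ne']
  · rw [smul_smul, mul_inv_cancel₀ (Real.sqrt_pos.2 hpos).ne', one_smul]

lemma sq_add_sq_cross_dotProduct {u : Fin 3 → ℝ} (hu : u ⬝ᵥ u = 1) (p v : Fin 3 → ℝ) :
    (p ⬝ᵥ v - (u ⬝ᵥ p) * (u ⬝ᵥ v)) ^ 2 + ((u ⨯₃ p) ⬝ᵥ v) ^ 2 =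
      (p ⬝ᵥ p - (u ⬝ᵥ p) ^ 2) * (v ⬝ᵥ v - (u ⬝ᵥ v) ^ 2) := by
  -- the Gram determinant of `u, p, v`
  have gram : ((u ⨯₃ p) ⬝ᵥ v) ^ 2 = (u ⬝ᵥ u) * ((p ⬝ᵥ p) * (v ⬝ᵥ v) - (p ⬝ᵥ v) ^ 2)
      - (u ⬝ᵥ p) ^ 2 * (v ⬝ᵥ v) + 2 * (u ⬝ᵥ p) * (p ⬝ᵥ v) * (u ⬝ᵥ v)
      - (p ⬝ᵥ p) * (u ⬝ᵥ v) ^ 2 := by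
    simp [cross_apply, vec3_dotProduct, vecHead, vecTail]
    ring
  linear_combination gram + ((p ⬝ᵥ p) * (v ⬝ᵥ v) - (p ⬝ᵥ v) ^ 2) * hu


lemma exists_mul_cos_add_mul_sin_eq {b c t : ℝ} (h : t ^ 2 ≤ b ^ 2 + c ^ 2) :
    ∃ φ, b * Real.cos φ + c * Real.sin φ = t := by
  set z : ℂ := ⟨b, c⟩
  rcases eq_or_ne z 0 with hz | hz
  · obtain ⟨rfl, rfl⟩ : b = 0 ∧ c = 0 := by simpa [Complex.ext_iff, z] using hz
    exact ⟨0, by nlinarith [sq_nonneg t]⟩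
  have hr : 0 < ‖z‖ := norm_pos_iff.2 hz
  have hr2 : ‖z‖ ^ 2 = b ^ 2 + c ^ 2 := by rw [Complex.sq_norm, Complex.normSq_apply]; ring
  have ht : |t / ‖z‖| ≤ 1 := by
    rw [abs_div, abs_norm, div_le_one hr, ← sq_le_sq₀ (abs_nonneg t) hr.le, sq_abs, hr2]
    exact h
  refine ⟨z.arg + Real.arccos (t / ‖z‖), ?_⟩
  rw [Real.cos_add, Real.sin_add, Complex.cos_arg hz, Complex.sin_arg,
    Real.cos_arccos (abs_le.1 ht).1 (abs_le.1 ht).2]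
  have hre : z.re = b := rfl
  have him : z.im = c := rfl
  rw [hre, him]
  field_simp
  linear_combination -t * hr2

lemma cos_le_cos_of_le_two_pi_sub {x y : ℝ} (hx : 0 ≤ x) (hxy : x ≤ y) (hy : y ≤ 2 * π - x) :
    Real.cos y ≤ Real.cos x := by
  rcases le_total y π with h | h
  · exact Real.cos_le_cos_of_nonneg_of_le_pi hx h hxy
  · rw [← Real.cos_two_pi_sub y]
    exact Real.cos_le_cos_of_nonneg_of_le_pi hx (by linarith) (by linarith)

lemma cos_add_le_cos_max_sub {ρ θ : ℝ} (hρ : 0 ≤ ρ) (hρπ : ρ ≤ π) (hθ : 0 ≤ θ) (hθπ : θ ≤ π / 2) :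
    Real.cos (ρ + θ) ≤ Real.cos (max θ (ρ - θ)) ∧ Real.cos (max θ (ρ - θ)) ≤ Real.cos (ρ - θ) := by
  constructor
  · exact cos_le_cos_of_le_two_pi_sub (le_max_of_le_left hθ)
      (max_le (by linarith) (by linarith)) (by rcases max_cases θ (ρ - θ) with h | h <;> linarith)
  · rw [← Real.cos_abs (ρ - θ)]
    exact Real.cos_le_cos_of_nonneg_of_le_pi (abs_nonneg _) (max_le (by linarith) (by linarith))
      (abs_le.2 ⟨by linarith [le_max_left θ (ρ - θ)], le_max_right _ _⟩)


lemma dotσ_eq (u : Fin 3 → ℝ) :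
    dotσ u = !![(u 2 : ℂ), u 0 - u 1 * I; u 0 + u 1 * I, -(u 2 : ℂ)] := by
  ext i j
  fin_cases i <;> fin_cases j <;> simp [dotσ, σx, σy, σz, sub_eq_add_neg]

lemma dotσ_zero : dotσ 0 = 0 := by simp [dotσ]

lemma dotσ_neg (u : Fin 3 → ℝ) : dotσ (-u) = -dotσ u := by
  simp only [dotσ, Pi.neg_apply, ofReal_neg, neg_smul]; abel

lemma dotσ_smul (r : ℝ) (u : Fin 3 → ℝ) : dotσ (r • u) = (r : ℂ) • dotσ u := by
  simp only [dotσ, Pi.smul_apply, smul_eq_mul, ofReal_mul, mul_smul, smul_add]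

lemma dotσ_mul_dotσ (u v : Fin 3 → ℝ) :
    dotσ u * dotσ v = ((u ⬝ᵥ v : ℝ) : ℂ) • 1 + I • dotσ (u ⨯₃ v) := by
  simp only [dotσ_eq]
  ext i j
  fin_cases i <;> fin_cases j <;>
    simp [Matrix.mul_apply, cross_apply, vec3_dotProduct] <;> ring_nf <;> simp [I_sq] <;> ring

lemma dotσ_mul_self (u : Fin 3 → ℝ) : dotσ u * dotσ u = ((u ⬝ᵥ u : ℝ) : ℂ) • 1 := by
  rw [dotσ_mul_dotσ, cross_self, dotσ_zero, smul_zero, add_zero]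

lemma conj_dotσ (c s : ℝ) (u p : Fin 3 → ℝ) :
    ((c : ℂ) • 1 - (I * s) • dotσ u) * dotσ p * ((c : ℂ) • 1 + (I * s) • dotσ u) =
      dotσ ((c ^ 2 - s ^ 2 * (u ⬝ᵥ u)) • p + (2 * c * s) • (u ⨯₃ p) +
        (2 * s ^ 2 * (u ⬝ᵥ p)) • u) := by
  simp only [dotσ_eq]
  ext i j
  fin_cases i <;> fin_cases j <;>
    simp [Matrix.mul_apply, cross_apply, vec3_dotProduct, vecHead, vecTail] <;> ring_nf <;>
    simp [I_sq] <;> ring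


lemma Rot_zero (u : Fin 3 → ℝ) : Rot u 0 = 1 := by simp [Rot]

lemma Rot_neg_axis (u : Fin 3 → ℝ) (θ : ℝ) : Rot (-u) θ = Rot u (-θ) := by
  simp only [Rot, dotσ_neg, neg_div, Real.cos_neg, Real.sin_neg, ofReal_neg, smul_neg, mul_neg,
    neg_smul, sub_neg_eq_add]

section Rotation

variable {u : Fin 3 → ℝ}

lemma Rot_mul_Rot (hu : u ⬝ᵥ u = 1) (a b : ℝ) : Rot u a * Rot u b = Rot u (a + b) := by
  have hσ : dotσ u * dotσ u = 1 := by rw [dotσ_mul_self, hu, ofReal_one, one_smul]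
  simp only [Rot, sub_mul, mul_sub, smul_mul_smul_comm, one_mul, mul_one, hσ, add_div,
    Real.cos_add, Real.sin_add]
  push_cast
  match_scalars
  · linear_combination sin (a / 2) * sin (b / 2) * I_sq
  · ring

lemma Rot_mul_Rot_neg (hu : u ⬝ᵥ u = 1) (θ : ℝ) : Rot u θ * Rot u (-θ) = 1 := by
  rw [Rot_mul_Rot hu, add_neg_cancel, Rot_zero]

lemma Rot_neg_mul_Rot (hu : u ⬝ᵥ u = 1) (θ : ℝ) : Rot u (-θ) * Rot u θ = 1 := by
  rw [Rot_mul_Rot hu, neg_add_cancel, Rot_zero]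

/-- Rodrigues' formula; a rotation when `u` is a unit vector. -/
def rodrigues (u : Fin 3 → ℝ) (θ : ℝ) (p : Fin 3 → ℝ) : Fin 3 → ℝ :=
  Real.cos θ • p + Real.sin θ • (u ⨯₃ p) + ((1 - Real.cos θ) * (u ⬝ᵥ p)) • u

lemma Rot_mul_dotσ_mul_Rot_neg (hu : u ⬝ᵥ u = 1) (θ : ℝ) (p : Fin 3 → ℝ) :
    Rot u θ * dotσ p * Rot u (-θ) = dotσ (rodrigues u θ p) := by
  have hRot_neg : Rot u (-θ) = (Real.cos (θ / 2) : ℂ) • 1 + (I * Real.sin (θ / 2)) • dotσ u := by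
    rw [Rot, neg_div, Real.cos_neg, Real.sin_neg, ofReal_neg, mul_neg, neg_smul, sub_neg_eq_add]
  rw [hRot_neg, Rot, conj_dotσ, hu, rodrigues]
  obtain ⟨t, rfl⟩ : ∃ t, θ = 2 * t := ⟨θ / 2, by ring⟩
  rw [mul_div_cancel_left₀ t two_ne_zero, Real.cos_two_mul', Real.sin_two_mul]
  congr 1
  match_scalars
  · ring
  · ring
  · linear_combination (u ⬝ᵥ p) * Real.sin_sq_add_cos_sq t

lemma rodrigues_dotProduct_self (hu : u ⬝ᵥ u = 1) (θ : ℝ) (p : Fin 3 → ℝ) :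
    rodrigues u θ p ⬝ᵥ rodrigues u θ p = p ⬝ᵥ p := by
  have h : ((rodrigues u θ p ⬝ᵥ rodrigues u θ p : ℝ) : ℂ) • (1 : Matrix (Fin 2) (Fin 2) ℂ) =
      ((p ⬝ᵥ p : ℝ) : ℂ) • 1 := by
    rw [← dotσ_mul_self, ← Rot_mul_dotσ_mul_Rot_neg hu]
    calc Rot u θ * dotσ p * Rot u (-θ) * (Rot u θ * dotσ p * Rot u (-θ))
        = Rot u θ * dotσ p * (Rot u (-θ) * Rot u θ) * dotσ p * Rot u (-θ) := by
          simp only [mul_assoc]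
      _ = ((p ⬝ᵥ p : ℝ) : ℂ) • (Rot u θ * Rot u (-θ)) := by
          rw [Rot_neg_mul_Rot hu, mul_one, mul_assoc (Rot u θ), dotσ_mul_self, mul_smul_comm,
            smul_mul_assoc, mul_one]
      _ = _ := by rw [Rot_mul_Rot_neg hu]
  exact_mod_cast smul_left_injective ℂ one_ne_zero h

lemma rodrigues_dotProduct (u : Fin 3 → ℝ) (θ : ℝ) (p v : Fin 3 → ℝ) :
    rodrigues u θ p ⬝ᵥ v = Real.cos θ * (p ⬝ᵥ v) + Real.sin θ * ((u ⨯₃ p) ⬝ᵥ v) +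
      (1 - Real.cos θ) * (u ⬝ᵥ p) * (u ⬝ᵥ v) := by
  simp only [rodrigues, add_dotProduct, smul_dotProduct, smul_eq_mul, mul_assoc]

end Rotation

section Reach

variable {u p v : Fin 3 → ℝ}

lemma cos_arccos_dotProduct (hu : u ⬝ᵥ u = 1) (hv : v ⬝ᵥ v = 1) :
    Real.cos (Real.arccos (u ⬝ᵥ v)) = u ⬝ᵥ v :=
  Real.cos_arccos (abs_le.1 (abs_dotProduct_le_one hu hv)).1
    (abs_le.1 (abs_dotProduct_le_one hu hv)).2

lemma exists_rodrigues_dotProduct_eq (hu : u ⬝ᵥ u = 1) (hp : p ⬝ᵥ p = 1) (hv : v ⬝ᵥ v = 1)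
    {t : ℝ} (h₁ : Real.cos (Real.arccos (u ⬝ᵥ p) + Real.arccos (u ⬝ᵥ v)) ≤ t)
    (h₂ : t ≤ Real.cos (Real.arccos (u ⬝ᵥ p) - Real.arccos (u ⬝ᵥ v))) :
    ∃ φ, rodrigues u φ p ⬝ᵥ v = t := by
  set a := Real.arccos (u ⬝ᵥ p)
  set b := Real.arccos (u ⬝ᵥ v)
  have ha : Real.cos a = u ⬝ᵥ p := cos_arccos_dotProduct hu hp
  have hb : Real.cos b = u ⬝ᵥ v := cos_arccos_dotProduct hu hv
  have hsin : 0 ≤ Real.sin a * Real.sin b :=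
    mul_nonneg (Real.sin_nonneg_of_nonneg_of_le_pi (Real.arccos_nonneg _) (Real.arccos_le_pi _))
      (Real.sin_nonneg_of_nonneg_of_le_pi (Real.arccos_nonneg _) (Real.arccos_le_pi _))
  rw [Real.cos_add] at h₁
  rw [Real.cos_sub] at h₂
  -- `rodrigues u φ p ⬝ᵥ v = cos a cos b + B cos φ + C sin φ` with `B² + C² = (sin a sin b)²`
  have hsq : (t - (u ⬝ᵥ p) * (u ⬝ᵥ v)) ^ 2 ≤
      (p ⬝ᵥ v - (u ⬝ᵥ p) * (u ⬝ᵥ v)) ^ 2 + ((u ⨯₃ p) ⬝ᵥ v) ^ 2 := by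
    rw [sq_add_sq_cross_dotProduct hu, hp, hv, ← ha, ← hb, ← Real.sin_sq, ← Real.sin_sq, ← mul_pow]
    exact sq_le_sq' (by linarith) (by linarith)
  obtain ⟨φ, hφ⟩ := exists_mul_cos_add_mul_sin_eq hsq
  refine ⟨φ, ?_⟩
  rw [rodrigues_dotProduct]
  linear_combination hφ

lemma exists_rodrigues_rodrigues_arccos_eq {n m : Fin 3 → ℝ} (hn : n ⬝ᵥ n = 1)
    (hm : m ⬝ᵥ m = 1) (hp : p ⬝ᵥ p = 1) (hnm : 0 ≤ n ⬝ᵥ m) :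
    ∃ φ ψ, Real.arccos (n ⬝ᵥ rodrigues m ψ (rodrigues n φ p)) =
      max 0 (Real.arccos (n ⬝ᵥ p) - 2 * Real.arccos (n ⬝ᵥ m)) := by
  set ρ := Real.arccos (n ⬝ᵥ p)
  set θ := Real.arccos (n ⬝ᵥ m)
  have hθ₀ : 0 ≤ θ := Real.arccos_nonneg _
  have hθ : θ ≤ π / 2 := Real.arccos_le_pi_div_two.2 hnm
  have hρ : ρ ≤ π := Real.arccos_le_pi _
  set α := max θ (ρ - θ)
  have hθα : θ ≤ α := le_max_left _ _
  have hαπ : α ≤ π := max_le (by linarith [Real.pi_pos]) (by linarith)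
  obtain ⟨h₁, h₂⟩ := cos_add_le_cos_max_sub (Real.arccos_nonneg _) hρ hθ₀ hθ
  obtain ⟨φ, hφ⟩ := exists_rodrigues_dotProduct_eq hn hp hm h₁ h₂
  set p' := rodrigues n φ p
  have hp' : p' ⬝ᵥ p' = 1 := (rodrigues_dotProduct_self hn φ p).trans hp
  have hmp' : Real.arccos (m ⬝ᵥ p') = α := by
    rw [dotProduct_comm, hφ, Real.arccos_cos (by linarith) hαπ]
  have hmn : Real.arccos (m ⬝ᵥ n) = θ := by rw [dotProduct_comm]
  obtain ⟨ψ, hψ⟩ := exists_rodrigues_dotProduct_eq (t := Real.cos (α - θ)) hm hp' hn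
    (by
      rw [hmp', hmn, Real.cos_add, Real.cos_sub]
      nlinarith [Real.sin_nonneg_of_nonneg_of_le_pi (by linarith) hαπ,
        Real.sin_nonneg_of_nonneg_of_le_pi hθ₀ (by linarith [Real.pi_pos] : θ ≤ π)])
    (by rw [hmp', hmn])
  refine ⟨φ, ψ, ?_⟩
  rw [dotProduct_comm, hψ, Real.arccos_cos (by linarith) (by linarith),
    ← max_sub_sub_right]
  congr 1 <;> ring

end Reach

section Orbit

variable (S : Submonoid (Matrix (Fin 2) (Fin 2) ℂ)) (n : Fin 3 → ℝ)

def axisOrbit : Set (Fin 3 → ℝ) :=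
  {p | ∃ W ∈ S, ∃ W' ∈ S, W * W' = 1 ∧ W * dotσ p * W' = dotσ n}

variable {S n}

lemma self_mem_axisOrbit : n ∈ axisOrbit S n :=
  ⟨1, S.one_mem, 1, S.one_mem, mul_one 1, by rw [one_mul, mul_one]⟩

lemma mem_axisOrbit_of_rodrigues_mem {u p : Fin 3 → ℝ} (hu : u ⬝ᵥ u = 1)
    (hS : ∀ θ, Rot u θ ∈ S) {θ : ℝ} (h : rodrigues u θ p ∈ axisOrbit S n) : p ∈ axisOrbit S n := by
  obtain ⟨W, hW, W', hW', hWW', hconj⟩ := h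
  refine ⟨W * Rot u θ, S.mul_mem hW (hS θ), Rot u (-θ) * W', S.mul_mem (hS (-θ)) hW', ?_, ?_⟩
  · rw [mul_assoc, ← mul_assoc (Rot u θ), Rot_mul_Rot_neg hu, one_mul, hWW']
  · rw [← hconj, ← Rot_mul_dotσ_mul_Rot_neg hu]
    simp only [mul_assoc]

lemma Rot_mem_of_mem_axisOrbit {p : Fin 3 → ℝ} (hp : p ∈ axisOrbit S n) {ψ : ℝ}
    (hS : Rot n ψ ∈ S) : Rot p ψ ∈ S := by
  obtain ⟨W, hW, W', hW', hWW', hconj⟩ := hp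
  have hW'W : W' * W = 1 := mul_eq_one_comm.1 hWW'
  have : Rot p ψ = W' * Rot n ψ * W := by
    rw [Rot, Rot, ← hconj]
    simp only [mul_sub, sub_mul, mul_smul_comm, smul_mul_assoc, mul_one, ← mul_assoc, hW'W,
      one_mul]
    simp only [mul_assoc, hW'W, mul_one]
  rw [this]
  exact S.mul_mem (S.mul_mem hW' hS) hW

lemma mem_axisOrbit_of_arccos_le {m : Fin 3 → ℝ} (hn : n ⬝ᵥ n = 1) (hm : m ⬝ᵥ m = 1)
    (hnm : 0 ≤ n ⬝ᵥ m) (hSn : ∀ θ, Rot n θ ∈ S) (hSm : ∀ θ, Rot m θ ∈ S) (j : ℕ) :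
    ∀ p : Fin 3 → ℝ, p ⬝ᵥ p = 1 → Real.arccos (n ⬝ᵥ p) ≤ 2 * j * Real.arccos (n ⬝ᵥ m) →
      p ∈ axisOrbit S n := by
  induction j with
  | zero =>
    intro p hp hnp
    have : n ⬝ᵥ p = 1 := le_antisymm (abs_le.1 (abs_dotProduct_le_one hn hp)).2
      (Real.arccos_eq_zero.1 (le_antisymm (by simpa using hnp) (Real.arccos_nonneg _)))
    rw [← eq_of_dotProduct_eq_one hn hp this]
    exact self_mem_axisOrbit
  | succ j ih =>
    intro p hp hnp
    obtain ⟨φ, ψ, hφψ⟩ := exists_rodrigues_rodrigues_arccos_eq hn hm hp hnm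
    refine mem_axisOrbit_of_rodrigues_mem (θ := φ) hn hSn
      (mem_axisOrbit_of_rodrigues_mem (θ := ψ) hm hSm (ih _ ?_ ?_))
    · rw [rodrigues_dotProduct_self hm, rodrigues_dotProduct_self hn, hp]
    · rw [hφψ]
      push_cast at hnp
      exact max_le (mul_nonneg (by positivity) (Real.arccos_nonneg _)) (by linarith)

lemma mem_axisOrbit {m p : Fin 3 → ℝ} (hn : n ⬝ᵥ n = 1) (hm : m ⬝ᵥ m = 1)
    (hnm : |n ⬝ᵥ m| < 1) (hSn : ∀ θ, Rot n θ ∈ S) (hSm : ∀ θ, Rot m θ ∈ S) (hp : p ⬝ᵥ p = 1) :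
    p ∈ axisOrbit S n := by
  -- a rotation about `-m` is one about `m`, so we may assume that `n ⬝ᵥ m ≥ 0`
  obtain ⟨m', hm', hnm', hSm'⟩ : ∃ m', m' ⬝ᵥ m' = 1 ∧ |n ⬝ᵥ m| = n ⬝ᵥ m' ∧ ∀ θ, Rot m' θ ∈ S := by
    rcases le_total 0 (n ⬝ᵥ m) with h | h
    · exact ⟨m, hm, abs_of_nonneg h, hSm⟩
    · exact ⟨-m, by simpa using hm, by simp [abs_of_nonpos h],
        fun θ ↦ (Rot_neg_axis m θ).symm ▸ hSm (-θ)⟩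
  have hθ : 0 < Real.arccos (n ⬝ᵥ m') := Real.arccos_pos.2 (hnm' ▸ hnm)
  obtain ⟨j, hj⟩ := exists_nat_ge (π / (2 * Real.arccos (n ⬝ᵥ m')))
  refine mem_axisOrbit_of_arccos_le hn hm' (hnm' ▸ abs_nonneg _) hSn hSm' j p hp ?_
  rw [div_le_iff₀ (by positivity)] at hj
  linarith [Real.arccos_le_pi (n ⬝ᵥ p)]

end Orbit

lemma exists_exp_smul_mem_specialUnitaryGroup {ι : Type*} [Fintype ι] [DecidableEq ι]
    [Nonempty ι] {U : Matrix ι ι ℂ} (hU : U ∈ unitaryGroup ι ℂ) :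
    ∃ (α : ℝ) (V : Matrix ι ι ℂ), V ∈ specialUnitaryGroup ι ℂ ∧ U = exp (I * α) • V := by
  obtain ⟨θ, hθ⟩ := (Complex.norm_eq_one_iff _).1 (CStarRing.norm_of_mem_unitary
    (det_of_mem_unitary hU))
  have hk : (Fintype.card ι : ℂ) ≠ 0 := Nat.cast_ne_zero.2 Fintype.card_ne_zero
  refine ⟨θ / Fintype.card ι, exp (-(I * (θ / Fintype.card ι : ℝ))) • U,
    mem_specialUnitaryGroup_iff.2 ⟨?_, ?_⟩, ?_⟩
  · refine Unitary.smul_mem_of_mem ?_ hU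
    rw [Unitary.mem_iff, Complex.star_def, ← exp_conj, ← exp_add, ← exp_add]
    simp
  · have : (Fintype.card ι : ℂ) * -(I * ((θ / Fintype.card ι : ℝ) : ℂ)) + θ * I = 0 := by
      push_cast
      field_simp
      ring
    rw [det_smul, ← hθ, ← exp_nat_mul, ← exp_add, this, exp_zero]
  · rw [smul_smul, ← exp_add, add_neg_cancel, exp_zero, one_smul]

lemma exists_eq_smul_one_sub_I_smul_dotσ {V : Matrix (Fin 2) (Fin 2) ℂ}
    (hV : V ∈ specialUnitaryGroup (Fin 2) ℂ) :
    ∃ (w : ℝ) (v : Fin 3 → ℝ), w ^ 2 + v ⬝ᵥ v = 1 ∧ V = (w : ℂ) • 1 - I • dotσ v := by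
  obtain ⟨hVU, hdet⟩ := mem_specialUnitaryGroup_iff.1 hV
  -- for `det V = 1` the inverse `star V` of `V` is its adjugate
  have hadj : star V = adjugate V :=
    left_inv_eq_right_inv (mem_unitaryGroup_iff'.1 hVU) (by rw [mul_adjugate, hdet, one_smul])
  rw [adjugate_fin_two] at hadj
  have h₁₁ : V 1 1 = star (V 0 0) := by simpa using (congrFun₂ hadj 0 0).symm
  have h₁₀ : V 1 0 = -star (V 0 1) := by simpa using congrArg Neg.neg (congrFun₂ hadj 1 0).symm
  set a := V 0 0
  set b := V 0 1
  refine ⟨a.re, ![-b.im, -b.re, -a.im], ?_, ?_⟩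
  · rw [det_fin_two, h₁₁, h₁₀] at hdet
    have := congrArg re hdet
    simp only [RCLike.star_def, mul_neg, sub_neg_eq_add, add_re, mul_re, conj_re, conj_im,
      one_re] at this
    simp only [dotProduct_cons, head_cons, tail_cons, dotProduct_of_isEmpty, add_zero]
    linear_combination this
  · ext i j
    fin_cases i <;> fin_cases j <;> simp [dotσ_eq, h₁₁, h₁₀, Complex.ext_iff, a, b]

lemma exists_eq_Rot {V : Matrix (Fin 2) (Fin 2) ℂ} (hV : V ∈ specialUnitaryGroup (Fin 2) ℂ) :
    ∃ (p : Fin 3 → ℝ) (ψ : ℝ), p ⬝ᵥ p = 1 ∧ V = Rot p ψ := by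
  obtain ⟨w, v, hwv, rfl⟩ := exists_eq_smul_one_sub_I_smul_dotσ hV
  obtain ⟨p, hp, hv⟩ := exists_dotProduct_self_eq_one_and_eq_smul v
  have hv₀ : 0 ≤ v ⬝ᵥ v := dotProduct_self_star_nonneg v
  have hw : w ^ 2 ≤ 1 := by linarith
  obtain ⟨hw₁, hw₂⟩ := abs_le.1 (sq_le_one_iff_abs_le_one w |>.1 hw)
  refine ⟨p, 2 * Real.arccos w, hp, ?_⟩
  rw [Rot, mul_div_cancel_left₀ _ two_ne_zero, Real.cos_arccos hw₁ hw₂, Real.sin_arccos,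
    show 1 - w ^ 2 = v ⬝ᵥ v by linarith, hv, dotσ_smul, smul_smul, ← hv]

section AlternatingProducts

variable (n m : Fin 3 → ℝ)

def alternatingRotProducts : Submonoid (Matrix (Fin 2) (Fin 2) ℂ) where
  carrier := {W | ∃ l : List (ℝ × ℝ), W = (l.map fun x ↦ Rot n x.1 * Rot m x.2).prod}
  mul_mem' := by
    rintro _ _ ⟨l₁, rfl⟩ ⟨l₂, rfl⟩
    exact ⟨l₁ ++ l₂, by rw [List.map_append, List.prod_append]⟩
  one_mem' := ⟨[], rfl⟩

lemma Rot_left_mem_alternatingRotProducts (β : ℝ) : Rot n β ∈ alternatingRotProducts n m :=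
  ⟨[(β, 0)], by simp [Rot_zero]⟩

lemma Rot_right_mem_alternatingRotProducts (γ : ℝ) : Rot m γ ∈ alternatingRotProducts n m :=
  ⟨[(0, γ)], by simp [Rot_zero]⟩

end AlternatingProducts

theorem unitary_decomposition_two_axes (n m : Fin 3 → ℝ)
    (hn : n 0 ^ 2 + n 1 ^ 2 + n 2 ^ 2 = 1)
    (hm : m 0 ^ 2 + m 1 ^ 2 + m 2 ^ 2 = 1)
    (hnm : n ≠ m) (hnm' : n ≠ -m)
    (U : Matrix (Fin 2) (Fin 2) ℂ) (hU : U ∈ Matrix.unitaryGroup (Fin 2) ℂ) :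
    ∃ (α : ℝ) (k : ℕ) (β γ : Fin k → ℝ),
      U = Complex.exp (Complex.I * (α : ℂ)) •
        (List.ofFn (fun i : Fin k => Rot n (β i) * Rot m (γ i))).prod := by
  have hn₁ : n ⬝ᵥ n = 1 := by rw [vec3_dotProduct]; linear_combination hn
  have hm₁ : m ⬝ᵥ m = 1 := by rw [vec3_dotProduct]; linear_combination hm
  obtain ⟨α, V, hV, rfl⟩ := exists_exp_smul_mem_specialUnitaryGroup hU
  obtain ⟨p, ψ, hp, rfl⟩ := exists_eq_Rot hV
  have hp_orbit : p ∈ axisOrbit (alternatingRotProducts n m) n :=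
    mem_axisOrbit hn₁ hm₁ (abs_dotProduct_lt_one hn₁ hm₁ hnm hnm')
      (Rot_left_mem_alternatingRotProducts n m) (Rot_right_mem_alternatingRotProducts n m) hp
  obtain ⟨l, hl⟩ := Rot_mem_of_mem_axisOrbit hp_orbit (Rot_left_mem_alternatingRotProducts n m ψ)
  refine ⟨α, l.length, fun i ↦ l[(i : ℕ)].1, fun i ↦ l[(i : ℕ)].2, ?_⟩
  rw [hl, ← List.ofFn_getElem_eq_map]
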